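/- arXiv:1709.02093 — 2 statements merged into one kernel-verified Lean document; each statement's English description precedes it below -/
import Mathlib

section
/- In one-step fraction-free Gaussian elimination applied to an n×n matrix whose entries are polynomials in ℚ[x₁,...,x_k] of total degree at most d, after m elimination steps every entry a^{(m)}_{i,j} is a polynomial of total degree at most (m+1)·d. -/
/-!
By Sylvester's determinant identity, the Bareiss entry `a⁽ᵐ⁾ᵢⱼ` is the determinant of the
`(m+1) × (m+1)` submatrix of `A` with rows `0, …, m-1, i` and columns `0, …, m-1, j`, so the
Leibniz expansion bounds its total degree by `(m+1)·d`. Sylvester's identity itself comes from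
Schur complements: once the leading `m × m` block `L` is invertible, a minor bordered by `p` extra
rows and columns is `det L` times the `p × p` determinant of the corresponding Schur complement
entries, and comparing `p = 1` with `p = 2` gives exactly the Bareiss recurrence.
-/

open MvPolynomial

/-- The entries produced by Bareiss' one-step fraction-free Gaussian elimination,
computed in a field: `a⁽⁰⁾ᵢⱼ = Aᵢⱼ`, and
`a⁽ᵐ⁺¹⁾ᵢⱼ = (a⁽ᵐ⁾ₘₘ·a⁽ᵐ⁾ᵢⱼ − a⁽ᵐ⁾ᵢₘ·a⁽ᵐ⁾ₘⱼ) / a⁽ᵐ⁻¹⁾ₘ₋₁,ₘ₋₁` (with divisor `1` for `m = 0`). -/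
noncomputable def bareiss {K : Type*} [Field K] (A : ℕ → ℕ → K) : ℕ → ℕ → ℕ → K
  | 0, i, j => A i j
  | m + 1, i, j =>
      (bareiss A m m m * bareiss A m i j - bareiss A m i m * bareiss A m m j) /
        (if m = 0 then 1 else bareiss A (m - 1) (m - 1) (m - 1))

open Matrix

theorem MvPolynomial.totalDegree_det_le {R σ n : Type*} [CommRing R] [Fintype n] [DecidableEq n]
    (M : Matrix n n (MvPolynomial σ R)) {d : ℕ} (hM : ∀ i j, (M i j).totalDegree ≤ d) :
    M.det.totalDegree ≤ Fintype.card n * d := by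
  rw [det_apply]
  refine totalDegree_finsetSum_le fun τ _ => ?_
  rw [Units.smul_def]
  refine (totalDegree_smul_le _ _).trans <| (totalDegree_finsetProd _ _).trans ?_
  calc ∑ i, (M (τ i) i).totalDegree ≤ ∑ _i : n, d := Finset.sum_le_sum fun i _ => hM _ _
    _ = Fintype.card n * d := by simp

section Minors

variable {R : Type*} [CommRing R]

def leadingMinor (A : ℕ → ℕ → R) (m : ℕ) : R :=
  ((of A).submatrix (Fin.val : Fin m → ℕ) Fin.val).det

/-- Rows `0, …, m - 1, i` and columns `0, …, m - 1, j` of `A`. -/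
def borderedMinor (A : ℕ → ℕ → R) (m i j : ℕ) : R :=
  ((of A).submatrix (Fin.append (Fin.val : Fin m → ℕ) ![i])
    (Fin.append (Fin.val : Fin m → ℕ) ![j])).det

theorem Fin.append_val_singleton (m : ℕ) : Fin.append (Fin.val : Fin m → ℕ) ![m] = Fin.val := by
  funext x
  refine Fin.addCases (fun a => ?_) (fun b => ?_) x <;> simp [Fin.fin_one_eq_zero]

theorem Fin.append_val_succ_singleton (m i : ℕ) :
    Fin.append (Fin.val : Fin (m + 1) → ℕ) ![i] = Fin.append (Fin.val : Fin m → ℕ) ![m, i] := by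
  rw [← Fin.append_val_singleton m, Fin.append_assoc]
  have hpair : Fin.append ![m] ![i] = ![m, i] := by ext x; fin_cases x <;> rfl
  rw [hpair]
  rfl

theorem borderedMinor_zero (A : ℕ → ℕ → R) (i j : ℕ) : borderedMinor A 0 i j = A i j := by
  simp [borderedMinor, Fin.append, Fin.addCases]

theorem borderedMinor_self (A : ℕ → ℕ → R) (m : ℕ) :
    borderedMinor A m m m = leadingMinor A (m + 1) := by
  rw [borderedMinor, leadingMinor, Fin.append_val_singleton]

theorem borderedMinor_map {S : Type*} [CommRing S] (f : R →+* S) (A : ℕ → ℕ → R) (m i j : ℕ) :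
    f (borderedMinor A m i j) = borderedMinor (fun i j => f (A i j)) m i j :=
  f.map_det _

end Minors

section Schur

variable {K : Type*} [Field K]

/-- Entry `(x, y)` of the Schur complement of the leading `m × m` block. -/
noncomputable def schurEntry (A : ℕ → ℕ → K) (m x y : ℕ) : K :=
  A x y - vecMul (fun b : Fin m => A x b) ((of A).submatrix (Fin.val : Fin m → ℕ) Fin.val)⁻¹ ⬝ᵥ
    fun a : Fin m => A a y

theorem det_submatrix_append (A : ℕ → ℕ → K) {m : ℕ} (hA : leadingMinor A m ≠ 0) {p : ℕ}
    (r c : Fin p → ℕ) :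
    ((of A).submatrix (Fin.append (Fin.val : Fin m → ℕ) r)
        (Fin.append (Fin.val : Fin m → ℕ) c)).det =
      leadingMinor A m * (of fun a b => schurEntry A m (r a) (c b)).det := by
  set L := (of A).submatrix (Fin.val : Fin m → ℕ) Fin.val
  have : Invertible L := invertibleOfIsUnitDet _ hA.isUnit
  have hblocks : ((of A).submatrix (Fin.append (Fin.val : Fin m → ℕ) r)
      (Fin.append (Fin.val : Fin m → ℕ) c)).submatrix finSumFinEquiv finSumFinEquiv =
      fromBlocks L (of fun a b => A a (c b)) (of fun a b => A (r a) b)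
        (of fun a b => A (r a) (c b)) := by
    ext (a | a) (b | b) <;> simp [L]
  rw [← det_submatrix_equiv_self finSumFinEquiv, hblocks, det_fromBlocks₁₁, invOf_eq_nonsing_inv]
  rfl

theorem borderedMinor_eq_mul_schurEntry (A : ℕ → ℕ → K) {m : ℕ} (hA : leadingMinor A m ≠ 0)
    (i j : ℕ) : borderedMinor A m i j = leadingMinor A m * schurEntry A m i j := by
  rw [borderedMinor, det_submatrix_append A hA, det_unique]
  rfl

theorem leadingMinor_mul_borderedMinor_succ (A : ℕ → ℕ → K) {m : ℕ} (hA : leadingMinor A m ≠ 0)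
    (i j : ℕ) :
    leadingMinor A m * borderedMinor A (m + 1) i j =
      borderedMinor A m m m * borderedMinor A m i j -
        borderedMinor A m i m * borderedMinor A m m j := by
  rw [borderedMinor, Fin.append_val_succ_singleton, Fin.append_val_succ_singleton,
    det_submatrix_append A hA, det_fin_two]
  simp only [borderedMinor_eq_mul_schurEntry A hA, of_apply, cons_val_zero, cons_val_one]
  ring

end Schur

theorem bareiss_eq_borderedMinor {K : Type*} [Field K] (A : ℕ → ℕ → K) :
    ∀ m, (∀ t, t + 1 < m → bareiss A t t t ≠ 0) → ∀ i j, bareiss A m i j = borderedMinor A m i j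
  | 0, _, i, j => by rw [bareiss, borderedMinor_zero]
  | m + 1, hpiv, i, j => by
    have ih := bareiss_eq_borderedMinor A m fun t ht => hpiv t (by omega)
    obtain ⟨hdiv, hA⟩ : (if m = 0 then 1 else bareiss A (m - 1) (m - 1) (m - 1)) =
        leadingMinor A m ∧ leadingMinor A m ≠ 0 := by
      cases m with
      | zero => simp [leadingMinor]
      | succ t =>
        have ht : bareiss A t t t = leadingMinor A (t + 1) := by
          rw [bareiss_eq_borderedMinor A t fun s hs => hpiv s (by omega), borderedMinor_self]
        simp only [Nat.add_sub_cancel, Nat.succ_ne_zero, if_false, ht, true_and]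
        exact ht ▸ hpiv t (by omega)
    rw [bareiss, hdiv, ih, ih, ih, ih, eq_comm, eq_div_iff hA, mul_comm,
      leadingMinor_mul_borderedMinor_succ A hA]

theorem totalDegree_borderedMinor_le {R σ : Type*} [CommRing R] (A : ℕ → ℕ → MvPolynomial σ R)
    {d : ℕ} (hd : ∀ i j, (A i j).totalDegree ≤ d) (m i j : ℕ) :
    (borderedMinor A m i j).totalDegree ≤ (m + 1) * d := by
  rw [← Fintype.card_fin (m + 1)]
  exact totalDegree_det_le _ fun a b => hd _ _

/-- In one-step fraction-free Gaussian elimination applied to a matrix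
whose entries are polynomials in `ℚ[x₁,…,x_k]` of total degree at most `d`, after `m`
elimination steps every entry `a⁽ᵐ⁾ᵢⱼ` is a polynomial of total degree at most `(m+1)·d`. -/
theorem bareiss_totalDegree_le (k d : ℕ) (A : ℕ → ℕ → MvPolynomial (Fin k) ℚ)
    (hd : ∀ i j, (A i j).totalDegree ≤ d)
    (hpiv : ∀ m, bareiss (fun i j =>
        algebraMap (MvPolynomial (Fin k) ℚ) (FractionRing (MvPolynomial (Fin k) ℚ)) (A i j))
        m m m ≠ 0) :
    ∀ m i j, m ≤ i → m ≤ j →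
      ∃ p : MvPolynomial (Fin k) ℚ,
        bareiss (fun i j =>
            algebraMap (MvPolynomial (Fin k) ℚ) (FractionRing (MvPolynomial (Fin k) ℚ)) (A i j))
            m i j
          = algebraMap (MvPolynomial (Fin k) ℚ) (FractionRing (MvPolynomial (Fin k) ℚ)) p ∧
        p.totalDegree ≤ (m + 1) * d := by
  intro m i j _ _
  refine ⟨borderedMinor A m i j, ?_, totalDegree_borderedMinor_le A hd m i j⟩
  rw [bareiss_eq_borderedMinor _ m fun t _ => hpiv t, borderedMinor_map]
end

section
/- Let M be a finite Markov chain with state space S, transition probability matrix P, and let T ⊆ S be a set of absorbing states. Let U be the set of states from which T is reachable in the underlying graph, and let p_s = Pr_s(◇T). Then the vector (p_s)_{s ∈ U\T} is the unique solution of the linear system p_s = Σ_{t ∈ U\T} P(s,t)·p_t + Σ_{t ∈ T} P(s,t), i.e., the matrix I − P restricted to U\T is invertible. -/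
open scoped Classical

/-- Probability of reaching `T` within `n` steps, starting from `s`, in the Markov chain
with transition matrix `P` (states in `T` are absorbing for this computation). -/
noncomputable def reachN {S : Type*} [Fintype S] (P : S → S → ℝ) (T : Set S) :
    ℕ → S → ℝ
  | 0, s => if s ∈ T then 1 else 0
  | n + 1, s => if s ∈ T then 1 else ∑ t, P s t * reachN P T n t

/-- Probability of eventually reaching `T` from `s`: `Pr_s(◇T) = ⨆ n, Pr_s(◇^{≤n} T)`. -/
noncomputable def reachProb {S : Type*} [Fintype S] (P : S → S → ℝ) (T : Set S) (s : S) :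
    ℝ :=
  ⨆ n, reachN P T n s


section
variable {S : Type*} [Fintype S] (P : S → S → ℝ) (T : Set S)

lemma reachN_nonneg (hnn : ∀ s t, 0 ≤ P s t) : ∀ n s, 0 ≤ reachN P T n s := by
  intro n
  induction n with
  | zero => intro s; simp only [reachN]; split <;> norm_num
  | succ n ih =>
    intro s; simp only [reachN]; split
    · norm_num
    · exact Finset.sum_nonneg fun t _ => mul_nonneg (hnn s t) (ih t)

lemma reachN_le_one (hnn : ∀ s t, 0 ≤ P s t) (hrow : ∀ s, ∑ t, P s t = 1) :
    ∀ n s, reachN P T n s ≤ 1 := by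
  intro n
  induction n with
  | zero => intro s; simp only [reachN]; split <;> norm_num
  | succ n ih =>
    intro s; simp only [reachN]; split
    · norm_num
    · calc ∑ t, P s t * reachN P T n t ≤ ∑ t, P s t * 1 :=
            Finset.sum_le_sum fun t _ => mul_le_mul_of_nonneg_left (ih t) (hnn s t)
        _ = 1 := by simp [hrow s]

lemma reachN_mono (hnn : ∀ s t, 0 ≤ P s t) :
    ∀ n s, reachN P T n s ≤ reachN P T (n + 1) s := by
  intro n
  induction n with
  | zero =>
    intro s; simp only [reachN]; split
    · norm_num
    · exact Finset.sum_nonneg fun t _ => mul_nonneg (hnn s t)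
        (reachN_nonneg P T hnn 0 t)
  | succ n ih =>
    intro s; simp only [reachN]; split
    · norm_num
    · exact Finset.sum_le_sum fun t _ => mul_le_mul_of_nonneg_left (ih t) (hnn s t)

lemma reachN_monotone (hnn : ∀ s t, 0 ≤ P s t) (s : S) :
    Monotone fun n => reachN P T n s :=
  monotone_nat_of_le_succ fun n => reachN_mono P T hnn n s

lemma reachN_of_mem (n : ℕ) {s : S} (hs : s ∈ T) : reachN P T n s = 1 := by
  cases n <;> simp [reachN, hs]

lemma reachProb_of_mem {s : S} (hs : s ∈ T) : reachProb P T s = 1 := by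
  simp [reachProb, reachN_of_mem P T _ hs]

lemma tendsto_reachN (hnn : ∀ s t, 0 ≤ P s t) (hrow : ∀ s, ∑ t, P s t = 1) (s : S) :
    Filter.Tendsto (fun n => reachN P T n s) Filter.atTop (nhds (reachProb P T s)) :=
  tendsto_atTop_ciSup (reachN_monotone P T hnn s)
    ⟨1, fun x ⟨n, hn⟩ => hn ▸ reachN_le_one P T hnn hrow n s⟩

lemma reachProb_eq_sum (hnn : ∀ s t, 0 ≤ P s t) (hrow : ∀ s, ∑ t, P s t = 1)
    {s : S} (hs : s ∉ T) :
    reachProb P T s = ∑ t, P s t * reachProb P T t := by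
  have h1 : Filter.Tendsto (fun n => reachN P T (n + 1) s) Filter.atTop
      (nhds (reachProb P T s)) :=
    (tendsto_reachN P T hnn hrow s).comp (Filter.tendsto_add_atTop_nat 1)
  have h2 : Filter.Tendsto (fun n => reachN P T (n + 1) s) Filter.atTop
      (nhds (∑ t, P s t * reachProb P T t)) := by
    have : (fun n => reachN P T (n + 1) s) = fun n => ∑ t, P s t * reachN P T n t := by
      funext n; simp [reachN, hs]
    rw [this]
    exact tendsto_finset_sum _ fun t _ =>
      (tendsto_reachN P T hnn hrow t).const_mul (P s t)
  exact tendsto_nhds_unique h1 h2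

lemma reachN_of_not_reach (n : ℕ) {s : S}
    (hs : s ∉ {u | ∃ t ∈ T, Relation.ReflTransGen (fun a b => P a b ≠ 0) u t}) :
    reachN P T n s = 0 := by
  induction n generalizing s with
  | zero =>
    have hsT : s ∉ T := fun h => hs ⟨s, h, Relation.ReflTransGen.refl⟩
    simp [reachN, hsT]
  | succ n ih =>
    have hsT : s ∉ T := fun h => hs ⟨s, h, Relation.ReflTransGen.refl⟩
    simp only [reachN, if_neg hsT]
    apply Finset.sum_eq_zero
    intro t _
    by_cases hPt : P s t = 0
    · simp [hPt]
    · have ht : t ∉ {u | ∃ w ∈ T, Relation.ReflTransGen (fun a b => P a b ≠ 0) u w} := by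
        intro ⟨w, hw, hpath⟩
        exact hs ⟨w, hw, Relation.ReflTransGen.head hPt hpath⟩
      rw [ih ht, mul_zero]

lemma reachProb_of_not_reach {s : S}
    (hs : s ∉ {u | ∃ t ∈ T, Relation.ReflTransGen (fun a b => P a b ≠ 0) u t}) :
    reachProb P T s = 0 := by
  simp [reachProb, reachN_of_not_reach P T _ hs]

end

/-- Let `M` be a finite Markov chain with stochastic matrix `P` and
`T` a set of absorbing states. Let `U` be the set of states from which `T` is reachable in
the underlying graph, and `p_s = Pr_s(◇T)`. Then the vector `(p_s)_{s ∈ U∖T}` solves the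
linear system `p_s = Σ_{t ∈ U∖T} P(s,t)·p_t + Σ_{t ∈ T} P(s,t)`, and the matrix `I − P`
restricted to `U∖T` is invertible (hence the solution is unique). -/
theorem reachProb_linear_system {S : Type*} [Fintype S] (P : S → S → ℝ)
    (hnn : ∀ s t, 0 ≤ P s t) (hrow : ∀ s, ∑ t, P s t = 1)
    (T : Set S) (habs : ∀ s ∈ T, ∀ t, P s t = if t = s then 1 else 0) :
    (∀ s : {s : S // s ∈ {u | ∃ t ∈ T, Relation.ReflTransGen (fun a b => P a b ≠ 0) u t} ∧ s ∉ T},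
        reachProb P T s.1
          = (∑ t : {s : S // s ∈ {u | ∃ t ∈ T, Relation.ReflTransGen (fun a b => P a b ≠ 0) u t} ∧ s ∉ T},
              P s.1 t.1 * reachProb P T t.1)
            + ∑ t ∈ T.toFinset, P s.1 t) ∧
    IsUnit (Matrix.det
      ((1 : Matrix {s : S // s ∈ {u | ∃ t ∈ T, Relation.ReflTransGen (fun a b => P a b ≠ 0) u t} ∧ s ∉ T}
                   {s : S // s ∈ {u | ∃ t ∈ T, Relation.ReflTransGen (fun a b => P a b ≠ 0) u t} ∧ s ∉ T} ℝ)
        - Matrix.of (fun s t => P s.1 t.1))) := by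
  classical
  set U : Set S := {u | ∃ t ∈ T, Relation.ReflTransGen (fun a b => P a b ≠ 0) u t} with hUdef
  have hTU : T ⊆ U := fun t ht => ⟨t, ht, Relation.ReflTransGen.refl⟩
  have hsubsum : ∀ (f : S → ℝ), (∑ t : {s : S // s ∈ U ∧ s ∉ T}, f t.1)
      = ∑ t ∈ Finset.univ.filter (fun t => t ∈ U ∧ t ∉ T), f t := by
    intro f
    exact (Finset.sum_subtype _ (by simp) f).symm
  constructor
  · rintro ⟨s, hsU, hsT⟩
    show reachProb P T s
      = (∑ t : {s : S // s ∈ U ∧ s ∉ T}, P s t.1 * reachProb P T t.1) + ∑ t ∈ T.toFinset, P s t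
    rw [reachProb_eq_sum P T hnn hrow hsT]
    have h1 := Finset.sum_filter_add_sum_filter_not Finset.univ (fun t => t ∈ T)
      (fun t => P s t * reachProb P T t)
    have h2 := Finset.sum_filter_add_sum_filter_not
      (Finset.univ.filter (fun t => t ∉ T)) (fun t => t ∈ U)
      (fun t => P s t * reachProb P T t)
    have e1 : ∑ t ∈ Finset.univ.filter (fun t => t ∈ T), P s t * reachProb P T t
        = ∑ t ∈ T.toFinset, P s t := by
      apply Finset.sum_congr (by ext t; simp)
      intro t ht
      rw [reachProb_of_mem P T (by simpa using ht), mul_one]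
    have e2 : ∑ t ∈ (Finset.univ.filter (fun t => t ∉ T)).filter (fun t => t ∉ U),
        P s t * reachProb P T t = 0 := by
      apply Finset.sum_eq_zero
      intro t ht
      simp only [Finset.mem_filter] at ht
      rw [reachProb_of_not_reach P T ht.2, mul_zero]
    have e3 : (Finset.univ.filter (fun t => t ∉ T)).filter (fun t => t ∈ U)
        = Finset.univ.filter (fun t => t ∈ U ∧ t ∉ T) := by
      ext t; simp [and_comm]
    rw [hsubsum (fun t => P s t * reachProb P T t)]
    rw [← h1, e1, ← h2, e2, add_zero, e3]
    exact add_comm _ _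
  · rw [isUnit_iff_ne_zero]
    intro hdet
    obtain ⟨v, hv0, hv⟩ := Matrix.exists_mulVec_eq_zero_iff.2 hdet
    have hfix : ∀ s : {s : S // s ∈ U ∧ s ∉ T}, v s = ∑ t, P s.1 t.1 * v t := by
      intro s
      have h := congrFun hv s
      simp only [Matrix.mulVec, dotProduct, Matrix.sub_apply, Matrix.one_apply,
        Matrix.of_apply, sub_mul, Finset.sum_sub_distrib, ite_mul, one_mul, zero_mul,
        Finset.sum_ite_eq, Finset.mem_univ, if_true, Pi.zero_apply, sub_eq_zero] at h
      exact h
    obtain ⟨w0, hw0⟩ : ∃ w, v w ≠ 0 := Function.ne_iff.mp hv0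
    obtain ⟨s₀, -, hs₀⟩ := Finset.exists_max_image Finset.univ (fun s => |v s|)
      ⟨w0, Finset.mem_univ w0⟩
    have hm : 0 < |v s₀| := lt_of_lt_of_le (abs_pos.mpr hw0) (hs₀ w0 (Finset.mem_univ w0))
    set m := |v s₀| with hmdef
    -- key step: from a max state, every successor stays in U \ T at max modulus
    have hmax : ∀ s : {s : S // s ∈ U ∧ s ∉ T}, |v s| = m →
        ∀ t : S, P s.1 t ≠ 0 → ∃ ht : t ∈ U ∧ t ∉ T, |v ⟨t, ht⟩| = m := by
      intro s hsm t hPt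
      have hA : m ≤ ∑ u : {s : S // s ∈ U ∧ s ∉ T}, P s.1 u.1 * |v u| := by
        rw [← hsm]
        calc |v s| = |∑ u, P s.1 u.1 * v u| := by rw [hfix s]
          _ ≤ ∑ u, |P s.1 u.1 * v u| := Finset.abs_sum_le_sum_abs _ _
          _ = ∑ u, P s.1 u.1 * |v u| := by
              refine Finset.sum_congr rfl fun u _ => ?_
              rw [abs_mul, abs_of_nonneg (hnn _ _)]
      have hB : (∑ u : {s : S // s ∈ U ∧ s ∉ T}, P s.1 u.1 * |v u|)
          ≤ ∑ u : {s : S // s ∈ U ∧ s ∉ T}, P s.1 u.1 * m :=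
        Finset.sum_le_sum fun u _ => mul_le_mul_of_nonneg_left
          (hs₀ u (Finset.mem_univ _)) (hnn _ _)
      have hsumle : (∑ u : {s : S // s ∈ U ∧ s ∉ T}, P s.1 u.1) ≤ 1 := by
        rw [hsubsum (fun t => P s.1 t), ← hrow s.1]
        exact Finset.sum_le_sum_of_subset_of_nonneg (Finset.filter_subset _ _)
          (fun u _ _ => hnn _ _)
      have hC : (∑ u : {s : S // s ∈ U ∧ s ∉ T}, P s.1 u.1 * m) ≤ m := by
        rw [← Finset.sum_mul]
        calc (∑ u : {s : S // s ∈ U ∧ s ∉ T}, P s.1 u.1) * m ≤ 1 * m :=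
              mul_le_mul_of_nonneg_right hsumle hm.le
          _ = m := one_mul m
      have hABeq : (∑ u : {s : S // s ∈ U ∧ s ∉ T}, P s.1 u.1 * |v u|)
          = ∑ u : {s : S // s ∈ U ∧ s ∉ T}, P s.1 u.1 * m :=
        le_antisymm hB (by linarith)
      have hCeq : (∑ u : {s : S // s ∈ U ∧ s ∉ T}, P s.1 u.1 * m) = m :=
        le_antisymm hC (by linarith)
      have hsum1 : (∑ u : {s : S // s ∈ U ∧ s ∉ T}, P s.1 u.1) = 1 := by
        have h' := hCeq
        rw [← Finset.sum_mul] at h'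
        exact mul_right_cancel₀ hm.ne' (by rw [h', one_mul])
      -- every t with P s t ≠ 0 lies in U \ T
      have hzero : ∑ u ∈ Finset.univ.filter (fun u => ¬(u ∈ U ∧ u ∉ T)), P s.1 u = 0 := by
        have := Finset.sum_filter_add_sum_filter_not Finset.univ
          (fun u => u ∈ U ∧ u ∉ T) (fun u => P s.1 u)
        rw [hrow s.1] at this
        rw [hsubsum (fun t => P s.1 t)] at hsum1
        linarith
      have ht : t ∈ U ∧ t ∉ T := by
        by_contra hc
        have := (Finset.sum_eq_zero_iff_of_nonneg (fun u _ => hnn s.1 u)).1 hzero t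
          (Finset.mem_filter.mpr ⟨Finset.mem_univ t, hc⟩)
        exact hPt this
      refine ⟨ht, ?_⟩
      have := (Finset.sum_eq_sum_iff_of_le
        (fun u (_ : u ∈ Finset.univ) => mul_le_mul_of_nonneg_left
          (hs₀ u (Finset.mem_univ _)) (hnn s.1 u.1))).1 hABeq ⟨t, ht⟩ (Finset.mem_univ _)
      have hPt' : P s.1 t ≠ 0 := hPt
      exact mul_left_cancel₀ hPt' this
    obtain ⟨w, hwT, hpath⟩ := s₀.2.1
    have hkill : ∀ (u) (_ : Relation.ReflTransGen (fun a b => P a b ≠ 0) u w),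
        ∀ hu : u ∈ U ∧ u ∉ T, |v ⟨u, hu⟩| = m → False := by
      intro u h
      induction h using Relation.ReflTransGen.head_induction_on with
      | refl => intro hu _; exact hu.2 hwT
      | head hstep _ ih =>
        intro hu heq
        obtain ⟨ht, heq'⟩ := hmax ⟨_, hu⟩ heq _ hstep
        exact ih ht heq'
    exact hkill s₀.1 hpath s₀.2 rfl
end
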